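/- arXiv:1110.5770 — 4 statements merged into one kernel-verified Lean document; each statement's English description precedes it below -/
import Mathlib

section
/- For every n ≥ 3, the cycle C_n satisfies rvc(C_n) ≤ ⌈n/2⌉. In particular, the coloring of C_n = v_1 v_2 ⋯ v_n that assigns color i to v_i for 1 ≤ i ≤ ⌈n/2⌉ and color i − ⌈n/2⌉ to v_i for ⌈n/2⌉ + 1 ≤ i ≤ n makes C_n rainbow vertex-connected. -/
/-- The list of internal vertices of a walk (its support minus the two ends). -/
def SimpleGraph.Walk.internalVertices {V : Type*} {G : SimpleGraph V} {u v : V}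
    (p : G.Walk u v) : List V :=
  p.support.tail.dropLast

/-- A walk is a *rainbow path* w.r.t. a vertex coloring `c` if it is a path and its
internal vertices receive pairwise distinct colors. -/
def SimpleGraph.Walk.IsRainbowPath {V α : Type*} {G : SimpleGraph V} {u v : V}
    (c : V → α) (p : G.Walk u v) : Prop :=
  p.IsPath ∧ (p.internalVertices.map c).Nodup

/-- A vertex-colored graph is *rainbow vertex-connected* if every pair of distinct
vertices is joined by at least one rainbow path. -/
def SimpleGraph.RainbowVertexConnected {V α : Type*} (G : SimpleGraph V) (c : V → α) : Prop :=
  ∀ u v : V, u ≠ v → ∃ p : G.Walk u v, p.IsRainbowPath c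

/-- `G` can be made rainbow vertex-connected using at most `k` colors: there is a
vertex coloring such that every pair of distinct vertices is joined by a rainbow path
all of whose internal vertices have colors among `0, …, k-1`. -/
def SimpleGraph.RVCWith {V : Type*} (G : SimpleGraph V) (k : ℕ) : Prop :=
  ∃ c : V → ℕ, ∀ u v : V, u ≠ v → ∃ p : G.Walk u v,
    p.IsRainbowPath c ∧ ∀ w ∈ p.internalVertices, c w < k

/-- The *rainbow vertex-connection number* `rvc G`: the minimum number of colors
needed to make `G` rainbow vertex-connected. -/
noncomputable def SimpleGraph.rvc {V : Type*} (G : SimpleGraph V) : ℕ :=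
  sInf {k | G.RVCWith k}

/-- A walk is a *revised rainbow path* w.r.t. a vertex coloring `c` if it is a path and
all of its vertices have distinct colors except that the two end vertices may share a
color. -/
def SimpleGraph.Walk.IsRevisedRainbowPath {V α : Type*} {G : SimpleGraph V} {u v : V}
    (c : V → α) (p : G.Walk u v) : Prop :=
  p.IsPath ∧ (p.support.dropLast.map c).Nodup ∧ (p.support.tail.map c).Nodup

/-- A vertex-colored graph is *revised rainbow vertex-connected* if every pair of
distinct vertices is joined by at least one revised rainbow path. -/
def SimpleGraph.RevisedRainbowVertexConnected {V α : Type*} (G : SimpleGraph V)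
    (c : V → α) : Prop :=
  ∀ u v : V, u ≠ v → ∃ p : G.Walk u v, p.IsRevisedRainbowPath c

/-- The *revised rainbow vertex-connection number* `rvc* G`. -/
noncomputable def SimpleGraph.rvcStar {V : Type*} (G : SimpleGraph V) : ℕ :=
  sInf {k | ∃ c : V → Fin k, G.RevisedRainbowVertexConnected c}

/-- A *cut vertex*: a vertex whose removal disconnects the graph. -/
def SimpleGraph.IsCutVertex {V : Type*} (G : SimpleGraph V) (v : V) : Prop :=
  ¬ (G.induce {u | u ≠ v}).Preconnected

/-- A *block* of `G`: a maximal (induced) connected subgraph without a cut vertex,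
described by its vertex set. -/
def SimpleGraph.IsBlock {V : Type*} (G : SimpleGraph V) (B : Set V) : Prop :=
  (G.induce B).Connected ∧ (∀ v, ¬ (G.induce B).IsCutVertex v) ∧
    ∀ C : Set V, B ⊆ C → (G.induce C).Connected →
      (∀ v, ¬ (G.induce C).IsCutVertex v) → C = B

/-! Colour vertex `i` of `Cₙ` by `i mod ⌈n/2⌉`. Since `n ≤ 2⌈n/2⌉`, two vertices of the same
colour differ by exactly `⌈n/2⌉`, i.e. they lie at cyclic distance `⌊n/2⌋`. Any two vertices are
joined by an arc of length at most `⌊n/2⌋`; its internal vertices are pairwise at cyclic distance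
less than `⌊n/2⌋`, hence receive distinct colours. -/

theorem Nat.eq_or_add_eq_of_mod_eq {m x y : ℕ} (hx : x < 2 * m) (hy : y < 2 * m)
    (h : x % m = y % m) : x = y ∨ x + m = y ∨ y + m = x := by
  have hx' := Nat.div_add_mod x m
  have hy' := Nat.div_add_mod y m
  have : x / m < 2 := Nat.div_lt_of_lt_mul (by omega)
  have : y / m < 2 := Nat.div_lt_of_lt_mul (by omega)
  interval_cases x / m <;> interval_cases y / m <;> omega

theorem Nat.add_mod_mod_ceil_half_ne {n a i j : ℕ} (hij : i < j) (hji : j < i + n / 2) :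
    (a + i) % n % ((n + 1) / 2) ≠ (a + j) % n % ((n + 1) / 2) := by
  intro h
  have hn : 0 < n := by omega
  have hx : (a + i) % n < n := Nat.mod_lt _ hn
  have hy : (a + j) % n = ((a + i) % n + (j - i)) % n := by
    rw [Nat.mod_add_mod]
    congr 1
    omega
  rw [hy] at h
  generalize (a + i) % n = x at h hx
  have key := Nat.eq_or_add_eq_of_mod_eq (m := (n + 1) / 2) (by omega)
    (by have := Nat.mod_lt (x + (j - i)) hn; omega) h
  rw [Nat.add_mod_eq_ite, Nat.mod_eq_of_lt hx, Nat.mod_eq_of_lt (by omega : j - i < n)] at key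
  split_ifs at key <;> omega

namespace SimpleGraph

variable {V α : Type*} {G : SimpleGraph V}

namespace Walk

theorem internalVertices_reverse {u v : V} (p : G.Walk u v) :
    p.reverse.internalVertices = p.internalVertices.reverse := by
  rw [internalVertices, internalVertices, support_reverse, List.tail_reverse,
    List.dropLast_reverse, List.tail_dropLast]

theorem IsRainbowPath.reverse {c : V → α} {u v : V} {p : G.Walk u v} (hp : p.IsRainbowPath c) :
    p.reverse.IsRainbowPath c := by
  refine ⟨hp.1.reverse, ?_⟩
  rw [internalVertices_reverse, List.map_reverse, List.nodup_reverse]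
  exact hp.2

def ofAdjSeq (f : ℕ → V) (hf : ∀ i, G.Adj (f i) (f (i + 1))) : (ℓ : ℕ) → G.Walk (f 0) (f ℓ)
  | 0 => nil
  | ℓ + 1 => (ofAdjSeq f hf ℓ).concat (hf ℓ)

variable {f : ℕ → V} {hf : ∀ i, G.Adj (f i) (f (i + 1))}

theorem support_ofAdjSeq (ℓ : ℕ) : (ofAdjSeq f hf ℓ).support = (List.range (ℓ + 1)).map f := by
  induction ℓ with
  | zero => rfl
  | succ ℓ ih => rw [ofAdjSeq, support_concat, ih, List.range_succ (n := ℓ + 1), List.map_append,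
      List.map_singleton]

theorem internalVertices_ofAdjSeq (ℓ : ℕ) :
    (ofAdjSeq f hf ℓ).internalVertices = (List.range (ℓ - 1)).map (fun i => f (i + 1)) := by
  rw [internalVertices, support_ofAdjSeq]
  cases ℓ with
  | zero => rfl
  | succ ℓ =>
    rw [List.range_succ_eq_map]
    simp only [List.map_cons, List.tail_cons, List.map_map, List.range_succ, List.map_append,
      List.map_nil, List.dropLast_concat, Nat.add_sub_cancel]
    rfl

theorem isRainbowPath_ofAdjSeq (c : V → α) {ℓ : ℕ} (hpath : Set.InjOn f (Set.Iic ℓ))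
    (hcol : Set.InjOn (c ∘ f) (Set.Ioo 0 ℓ)) : (ofAdjSeq f hf ℓ).IsRainbowPath c := by
  refine ⟨?_, ?_⟩
  · rw [isPath_def, support_ofAdjSeq]
    refine List.nodup_range.map_on fun i hi j hj h => hpath ?_ ?_ h
    · simpa [Nat.lt_succ_iff] using hi
    · simpa [Nat.lt_succ_iff] using hj
  · rw [internalVertices_ofAdjSeq, List.map_map]
    refine List.nodup_range.map_on fun i hi j hj h => Nat.succ_injective (hcol ?_ ?_ h)
    · simp only [List.mem_range] at hi
      exact ⟨i.succ_pos, by omega⟩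
    · simp only [List.mem_range] at hj
      exact ⟨j.succ_pos, by omega⟩

end Walk

namespace RainbowVertexConnected

theorem of_forall_lt [LinearOrder V] {c : V → α}
    (h : ∀ u v, u < v → ∃ p : G.Walk u v, p.IsRainbowPath c) : G.RainbowVertexConnected c := by
  intro u v huv
  rcases huv.lt_or_gt with huv | hvu
  · exact h u v huv
  · obtain ⟨p, hp⟩ := h v u hvu
    exact ⟨p.reverse, hp.reverse⟩

theorem of_comp {β : Type*} {c : V → α} (g : α → β) (h : G.RainbowVertexConnected (g ∘ c)) :
    G.RainbowVertexConnected c := by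
  intro u v huv
  obtain ⟨p, hpath, hcol⟩ := h u v huv
  exact ⟨p, hpath, List.Nodup.of_map g (by rwa [List.map_map])⟩

theorem rvc_le {k : ℕ} {c : V → Fin k} (h : G.RainbowVertexConnected c) : G.rvc ≤ k := by
  refine Nat.sInf_le ⟨fun v => c v, fun u v huv => ?_⟩
  obtain ⟨p, hpath, hcol⟩ := h u v huv
  refine ⟨p, ⟨hpath, ?_⟩, fun w _ => (c w).isLt⟩
  rw [← Function.comp_def, ← List.map_map]
  exact hcol.map Fin.val_injective

end RainbowVertexConnected

open Fin.NatCast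

theorem cycleGraph_exists_isRainbowPath_of_le_half {n : ℕ} [NeZero n] (hn : 2 ≤ n) (a ℓ : ℕ)
    (hℓ : ℓ ≤ n / 2) : ∃ p : (cycleGraph n).Walk (a : Fin n) ((a + ℓ : ℕ) : Fin n),
      p.IsRainbowPath (fun v : Fin n => v.val % ((n + 1) / 2)) := by
  let f : ℕ → Fin n := fun i => ((a + i : ℕ) : Fin n)
  have hval (i : ℕ) : (f i).val = (a + i) % n := Fin.val_natCast _ _
  have hf (i : ℕ) : (cycleGraph n).Adj (f i) (f (i + 1)) := by
    rw [cycleGraph_adj']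
    right
    simp only [f, ← add_assoc, Nat.cast_succ, add_sub_cancel_left, Fin.val_one',
      Nat.mod_eq_of_lt (by omega : 1 < n)]
  refine ⟨Walk.ofAdjSeq f hf ℓ, Walk.isRainbowPath_ofAdjSeq _ ?_ ?_⟩
  · intro i hi j hj h
    have hmod : a + i ≡ a + j [MOD n] := by rw [Nat.ModEq, ← hval, ← hval, h]
    have := Nat.ModEq.add_left_cancel' a hmod
    simp only [Set.mem_Iic] at hi hj
    rwa [Nat.ModEq, Nat.mod_eq_of_lt (by omega), Nat.mod_eq_of_lt (by omega)] at this
  · intro i hi j hj h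
    simp only [Function.comp_apply, hval] at h
    simp only [Set.mem_Ioo] at hi hj
    by_contra hne
    rcases Nat.lt_or_gt_of_ne hne with hij | hji
    · exact Nat.add_mod_mod_ceil_half_ne hij (by omega) h
    · exact Nat.add_mod_mod_ceil_half_ne hji (by omega) h.symm

theorem cycleGraph_rainbowVertexConnected_mod_ceil_half {n : ℕ} (hn : 2 ≤ n) :
    (cycleGraph n).RainbowVertexConnected (fun v : Fin n => v.val % ((n + 1) / 2)) := by
  have : NeZero n := ⟨by omega⟩
  refine RainbowVertexConnected.of_forall_lt fun u v (huv : u.val < v.val) => ?_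
  by_cases hshort : v.val - u.val ≤ n / 2
  · have hv : ((u.val + (v.val - u.val) : ℕ) : Fin n) = v := by
      rw [Nat.add_sub_cancel' huv.le, Fin.cast_val_eq_self]
    have h := cycleGraph_exists_isRainbowPath_of_le_half hn u.val _ hshort
    rwa [Fin.cast_val_eq_self, hv] at h
  · have hu : ((v.val + (n - (v.val - u.val)) : ℕ) : Fin n) = u := by
      rw [show v.val + (n - (v.val - u.val)) = u.val + n by omega, Nat.cast_add,
        Fin.natCast_self, add_zero, Fin.cast_val_eq_self]
    have h := cycleGraph_exists_isRainbowPath_of_le_half hn v.val (n - (v.val - u.val)) (by omega)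
    rw [Fin.cast_val_eq_self, hu] at h
    obtain ⟨p, hp⟩ := h
    exact ⟨p.reverse, hp.reverse⟩

end SimpleGraph

/-- `rvc (Cₙ) ≤ ⌈n/2⌉` for all `n ≥ 3`; in particular the coloring that
colors the `i`-th vertex (`0`-indexed) by `i mod ⌈n/2⌉` makes `Cₙ` rainbow
vertex-connected.  (Here `⌈n/2⌉ = (n + 1) / 2` with natural division.) -/
theorem rvc_cycleGraph_le_ceil_half (n : ℕ) (hn : 3 ≤ n) :
    (SimpleGraph.cycleGraph n).RainbowVertexConnected
      (fun i : Fin n =>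
        (⟨i.val % ((n + 1) / 2), Nat.mod_lt _ (by omega)⟩ : Fin ((n + 1) / 2))) ∧
    (SimpleGraph.cycleGraph n).rvc ≤ (n + 1) / 2 := by
  have hrvc : (SimpleGraph.cycleGraph n).RainbowVertexConnected
      (fun i : Fin n => (⟨i.val % ((n + 1) / 2), Nat.mod_lt _ (by omega)⟩ : Fin ((n + 1) / 2))) :=
    .of_comp Fin.val (SimpleGraph.cycleGraph_rainbowVertexConnected_mod_ceil_half (by omega))
  exact ⟨hrvc, hrvc.rvc_le⟩
end

section
/- If n = 14 or n ≥ 16, then every vertex coloring of the cycle C_n using at most ⌈n/2⌉ − 1 colors fails to make C_n rainbow vertex-connected; that is, rvc(C_n) ≥ ⌈n/2⌉. -/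
/-! Let `m = ⌊n/2⌋` and let `c` use fewer than `⌈n/2⌉` colours. Of the two arcs of `Cₙ` joining
`u` and `u + (m - 1)`, the long one has `⌈n/2⌉` internal vertices and cannot be rainbow, so the
short one is: any `m - 2` consecutive vertices get distinct colours. Hence two vertices of the same
colour are at cyclic distance at least `m - 2` in both directions. Since `3 (m - 2) > n` exactly
when `n = 14` or `n ≥ 16`, no colour is used three times, and `n ≤ 2 · #colours < n`. -/

open Fin.NatCast Fin.CommRing in
theorem Fin.card_le_two_of_forall_le_val_sub {α : Type*} [DecidableEq α] {n w : ℕ} [NeZero n]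
    {f : Fin n → α} (hn : n < 3 * w) (hf : ∀ x y, x ≠ y → f x = f y → w ≤ (y - x).val) (a : α) :
    (Finset.univ.filter (fun x => f x = a)).card ≤ 2 := by
  -- three points of one colour cut the cycle into three arcs, each of length at least `w`
  have three_arcs : ∀ x y z, x ≠ y → x ≠ z → (y - x).val < (z - x).val →
      f x = f y → f x = f z → False := by
    intro x y z hxy hxz hlt hy hz
    have hzy : (z - y).val = (z - x).val - (y - x).val := by
      rw [show z - y = (z - x) - (y - x) by ring, Fin.sub_val_of_le (Fin.le_def.mpr hlt.le)]
    have hxz' : (x - z).val = n - (z - x).val := by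
      rw [show x - z = -(z - x) by ring, Fin.val_neg, if_neg (sub_ne_zero.mpr hxz.symm)]
    have h1 := hf x y hxy hy
    have h2 := hf y z (fun h => by simp [h] at hlt) (hy.symm.trans hz)
    have h3 := hf z x hxz.symm hz.symm
    have := (z - x).isLt
    omega
  by_contra! hcard
  obtain ⟨x, hx, y, hy, z, hz, hxy, hxz, hyz⟩ := Finset.two_lt_card.mp hcard
  rw [Finset.mem_filter_univ] at hx hy hz
  have hval : (y - x).val ≠ (z - x).val := fun h => hyz (sub_left_inj.mp (Fin.ext h))
  rcases Nat.lt_or_gt_of_ne hval with hlt | hlt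
  · exact three_arcs x y z hxy hxz hlt (hx.trans hy.symm) (hx.trans hz.symm)
  · exact three_arcs x z y hxz hxy hlt (hx.trans hz.symm) (hx.trans hy.symm)

theorem Fin.le_two_mul_ncard_range_of_forall_le_val_sub {α : Type*} {n w : ℕ} [NeZero n]
    {f : Fin n → α} (hn : n < 3 * w) (hf : ∀ x y, x ≠ y → f x = f y → w ≤ (y - x).val) :
    n ≤ 2 * (Set.range f).ncard := by
  classical
  have := Finset.card_le_mul_card_image Finset.univ 2
    fun a _ => Fin.card_le_two_of_forall_le_val_sub hn hf a
  rwa [Finset.card_univ, Fintype.card_fin, ← Set.ncard_coe_finset, Finset.coe_image,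
    Finset.coe_univ, Set.image_univ] at this

namespace SimpleGraph

open Fin.NatCast Fin.CommRing

theorem Walk.IsRainbowPath.length_internalVertices_le {V α : Type*} [Finite V] {G : SimpleGraph V}
    {u v : V} {c : V → α} {p : G.Walk u v} (hp : p.IsRainbowPath c) :
    p.internalVertices.length ≤ (Set.range c).ncard := by
  classical
  calc p.internalVertices.length = (p.internalVertices.map c).toFinset.card := by
        rw [List.toFinset_card_of_nodup hp.2, List.length_map]
    _ ≤ (Set.range c).ncard := by
        rw [← Set.ncard_coe_finset]
        refine Set.ncard_le_ncard ?_ (Set.finite_range c)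
        intro x hx
        obtain ⟨y, -, rfl⟩ := List.mem_map.mp (List.mem_toFinset.mp hx)
        exact Set.mem_range_self y

theorem RVCWith.mono {V : Type*} {G : SimpleGraph V} {k l : ℕ} (h : G.RVCWith k) (hkl : k ≤ l) :
    G.RVCWith l := by
  obtain ⟨c, hc⟩ := h
  exact ⟨c, fun u v huv =>
    (hc u v huv).imp fun _ hp => ⟨hp.1, fun w hw => (hp.2 w hw).trans_le hkl⟩⟩

theorem Preconnected.rvcWith_card {V : Type*} [Fintype V] {G : SimpleGraph V}
    (hG : G.Preconnected) : G.RVCWith (Fintype.card V) := by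
  classical
  refine ⟨fun v => Fintype.equivFin V v, fun u v _ => ?_⟩
  obtain ⟨q⟩ := hG u v
  refine ⟨q.toPath, ⟨q.toPath.2, ?_⟩, fun x _ => (Fintype.equivFin V x).isLt⟩
  refine List.Nodup.map (Fin.val_injective.comp (Fintype.equivFin V).injective) ?_
  exact ((List.dropLast_sublist _).trans (List.tail_sublist _)).nodup q.toPath.2.support_nodup

theorem RVCWith.exists_rainbowVertexConnected {V : Type*} {G : SimpleGraph V} {k : ℕ}
    (h : G.RVCWith k) (hk : 0 < k) :
    ∃ c : V → ℕ, (Set.range c).ncard ≤ k ∧ G.RainbowVertexConnected c := by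
  obtain ⟨c, hc⟩ := h
  -- colours `≥ k` occur on none of the chosen paths, so they can all be merged into colour `0`
  refine ⟨fun v => if c v < k then c v else 0, ?_, fun u v huv => ?_⟩
  · calc (Set.range _).ncard ≤ (↑(Finset.range k) : Set ℕ).ncard := by
          refine Set.ncard_le_ncard ?_ (Finset.finite_toSet _)
          rintro _ ⟨v, rfl⟩
          simp only [Finset.coe_range, Set.mem_Iio]
          split_ifs <;> omega
      _ = k := by rw [Set.ncard_coe_finset, Finset.card_range]
  · obtain ⟨p, ⟨hp, hnodup⟩, hlt⟩ := hc u v huv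
    refine ⟨p, hp, ?_⟩
    rw [List.map_congr_left fun w hw => if_pos (hlt w hw)]
    exact hnodup

theorem Walk.IsPath.support_cycleGraph {n : ℕ} {u v : Fin (n + 2)}
    {p : (cycleGraph (n + 2)).Walk u v} (hp : p.IsPath) :
    ∃ s : Fin (n + 2), (s = 1 ∨ s = -1) ∧
      p.support = (List.range (p.length + 1)).map (fun i : ℕ => u + i * s) ∧
      v = u + p.length * s := by
  induction p with
  | nil => exact ⟨1, Or.inl rfl, by simp, by simp⟩
  | @cons u w v hadj q ih =>
    obtain ⟨hq, hu⟩ := Walk.cons_isPath_iff _ _ |>.mp hp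
    obtain ⟨s, hs, hsupp, hv⟩ := ih hq
    obtain ⟨t, ht, rfl⟩ : ∃ t : Fin (n + 2), (t = 1 ∨ t = -1) ∧ w = u + t := by
      rcases cycleGraph_adj.mp hadj with h | h
      · exact ⟨-1, Or.inr rfl, by rw [← h]; ring⟩
      · exact ⟨1, Or.inl rfl, by rw [← h]; ring⟩
    -- a path cannot step back to `u`, so it keeps the direction of its first edge
    have hst : q.length = 0 ∨ s = t := by
      refine or_iff_not_imp_left.mpr fun hlen => by_contra fun hne => hu ?_
      have hs' : s = -t := by
        rcases hs with rfl | rfl <;> rcases ht with rfl | rfl <;> simp_all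
      rw [hsupp, List.mem_map]
      exact ⟨1, List.mem_range.mpr (by omega), by simp [hs']⟩
    replace hsupp : q.support = (List.range (q.length + 1)).map (fun i : ℕ => u + t + i * t) ∧
        v = u + t + q.length * t := by
      rcases hst with h | rfl
      · simp [hsupp, hv, h]
      · exact ⟨hsupp, hv⟩
    refine ⟨t, ht, ?_, hsupp.2.trans ?_⟩
    · rw [Walk.support_cons, Walk.length_cons, List.range_succ_eq_map (n := q.length + 1),
        List.map_cons, List.map_map, hsupp.1]
      congr 1
      · simp
      · refine List.map_congr_left fun i _ => ?_
        simp only [Function.comp_apply, Nat.succ_eq_add_one, Nat.cast_add, Nat.cast_one]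
        ring
    · rw [Walk.length_cons]
      push_cast
      ring

theorem Walk.IsPath.internalVertices_cycleGraph {n : ℕ} {u v : Fin (n + 2)}
    {p : (cycleGraph (n + 2)).Walk u v} (hp : p.IsPath) :
    ∃ s : Fin (n + 2), (s = 1 ∨ s = -1) ∧
      p.internalVertices = (List.range' 1 (p.length - 1)).map (fun i : ℕ => u + i * s) ∧
      v = u + p.length * s := by
  obtain ⟨s, hs, hsupp, hv⟩ := hp.support_cycleGraph
  refine ⟨s, hs, ?_, hv⟩
  rw [Walk.internalVertices, hsupp, ← List.map_tail, List.tail_range, ← List.map_dropLast,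
    List.dropLast_eq_take, List.length_range', List.take_range'_of_length_ge (by omega)]
  simp

theorem RainbowVertexConnected.injOn_cycleGraph {α : Type*} {n w : ℕ} {c : Fin (n + 2) → α}
    (hc : (cycleGraph (n + 2)).RainbowVertexConnected c) (hw : (Set.range c).ncard + w + 1 ≤ n)
    (u : Fin (n + 2)) : Set.InjOn (fun i : ℕ => c (u + i)) (Set.Icc 1 w) := by
  have natCast_inj : ∀ a b : ℕ, a < n + 2 → b < n + 2 → (a : Fin (n + 2)) = b → a = b :=
    fun a b ha hb h => by
      simpa [Fin.val_cast_of_lt ha, Fin.val_cast_of_lt hb] using congrArg Fin.val h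
  have hne : u ≠ u + (w + 1 : ℕ) := fun h =>
    absurd (natCast_inj (w + 1) 0 (by omega) (by omega) (by simpa using h.symm)) (by omega)
  obtain ⟨p, hp⟩ := hc u _ hne
  obtain ⟨s, hs, hint, hv⟩ := hp.1.internalVertices_cycleGraph
  have hl : p.length < n + 2 := by simpa using hp.1.length_lt
  rcases hs with rfl | rfl
  · have hlen : p.length = w + 1 :=
      natCast_inj _ _ hl (by omega) (by simpa using (add_left_cancel hv).symm)
    intro i hi j hj hij
    have hmem : ∀ k ∈ Set.Icc 1 w, u + k ∈ p.internalVertices := fun k hk => by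
      rw [hint, List.mem_map]
      exact ⟨k, List.mem_range'_1.mpr (by simp at hk; omega), by simp⟩
    have := add_left_cancel (List.inj_on_of_nodup_map hp.2 (hmem i hi) (hmem j hj) hij)
    exact natCast_inj _ _ (by simp at hi; omega) (by simp at hj; omega) this
  · -- the arc through `u - 1` has more internal vertices than there are colours
    have hlen : p.length + (w + 1) = n + 2 := by
      refine Nat.eq_of_dvd_of_lt_two_mul (by omega) (Fin.natCast_eq_zero.mp ?_) (by omega)
      push_cast at hv ⊢
      linear_combination hv
    have := hp.length_internalVertices_le
    rw [hint, List.length_map, List.length_range'] at this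
    omega

theorem RainbowVertexConnected.le_val_sub_cycleGraph {α : Type*} {n w : ℕ}
    {c : Fin (n + 2) → α} (hc : (cycleGraph (n + 2)).RainbowVertexConnected c)
    (hw : (Set.range c).ncard + w + 1 ≤ n) {x y : Fin (n + 2)} (hxy : x ≠ y) (h : c x = c y) :
    w ≤ (y - x).val := by
  by_contra! hlt
  have hpos : (y - x).val ≠ 0 := fun h0 => hxy (sub_eq_zero.mp (Fin.ext h0)).symm
  have hx : x - 1 + ((1 : ℕ) : Fin (n + 2)) = x := by push_cast; ring
  have hy : x - 1 + (((y - x).val + 1 : ℕ) : Fin (n + 2)) = y := by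
    push_cast
    ring
  have := hc.injOn_cycleGraph hw (x - 1) (show 1 ∈ Set.Icc 1 w by simp; omega)
    (show (y - x).val + 1 ∈ Set.Icc 1 w by simp; omega) (show c _ = c _ by rw [hx, hy, h])
  omega

theorem not_rainbowVertexConnected_cycleGraph {α : Type*} {n : ℕ} (hn : n = 14 ∨ 16 ≤ n)
    {c : Fin n → α} (hc : (Set.range c).ncard ≤ (n + 1) / 2 - 1) :
    ¬ (cycleGraph n).RainbowVertexConnected c := by
  obtain ⟨n, rfl⟩ : ∃ m, n = m + 2 := ⟨n - 2, by omega⟩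
  intro hrvc
  have := Fin.le_two_mul_ncard_range_of_forall_le_val_sub (w := (n + 2) / 2 - 2) (by omega)
    fun x y hxy h => hrvc.le_val_sub_cycleGraph (by omega) hxy h
  omega

end SimpleGraph

/-- for `n = 14` or `n ≥ 16`, every vertex coloring of `Cₙ` using at most
`⌈n/2⌉ - 1` colors fails to make `Cₙ` rainbow vertex-connected; hence
`rvc (Cₙ) ≥ ⌈n/2⌉`.  (Here `⌈n/2⌉ = (n + 1) / 2` with natural division.) -/
theorem ceil_half_le_rvc_cycleGraph (n : ℕ) (hn : n = 14 ∨ 16 ≤ n) :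
    (∀ {α : Type*} (c : Fin n → α), (Set.range c).ncard ≤ (n + 1) / 2 - 1 →
      ¬ (SimpleGraph.cycleGraph n).RainbowVertexConnected c) ∧
    (n + 1) / 2 ≤ (SimpleGraph.cycleGraph n).rvc := by
  refine ⟨fun c hc => SimpleGraph.not_rainbowVertexConnected_cycleGraph hn hc, ?_⟩
  refine le_csInf ⟨_, SimpleGraph.cycleGraph_preconnected.rvcWith_card⟩ fun k hk => ?_
  by_contra! hlt
  obtain ⟨c, hc, hrvc⟩ :=
    (hk.mono (l := (n + 1) / 2 - 1) (by omega)).exists_rainbowVertexConnected (by omega)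
  exact SimpleGraph.not_rainbowVertexConnected_cycleGraph hn hc hrvc
end

section
/- For each n ∈ {6, 7, 8, 10, 11, 12, 13, 15}, there exists a vertex coloring of the cycle C_n using at most ⌈n/2⌉ − 1 colors that makes C_n rainbow vertex-connected; that is, rvc(C_n) ≤ ⌈n/2⌉ − 1 for these values of n. -/
/-!
A coloring of `Cₙ` makes it rainbow vertex-connected as soon as every two vertices are joined
by one of the two arcs of the cycle with rainbow interior. For each listed `n` an explicit
coloring with `⌈n/2⌉ - 1` colors has this property, which is checked by evaluation.
-/

open Fin.NatCast Fin.CommRing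

namespace SimpleGraph

variable {V α β : Type*} {G : SimpleGraph V}

/- Mathlib's `Decidable p.IsPath` is built with `rw` and is stuck in the kernel, so `decide`
needs an instance that goes through `decidable_of_iff`. -/
instance Walk.instDecidableIsRainbowPath [DecidableEq V] [DecidableEq α] {u v : V}
    (c : V → α) (p : G.Walk u v) : Decidable (p.IsRainbowPath c) :=
  decidable_of_iff (p.support.Nodup ∧ (p.internalVertices.map c).Nodup) <| by
    rw [Walk.IsRainbowPath, Walk.isPath_def]

theorem Walk.IsRainbowPath.comp {u v : V} {p : G.Walk u v} {c : V → α} {f : α → β}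
    (hf : Function.Injective f) (hp : p.IsRainbowPath c) : p.IsRainbowPath (f ∘ c) :=
  ⟨hp.1, by rw [← List.map_map]; exact hp.2.map hf⟩

theorem RainbowVertexConnected.rvcWith {k : ℕ} {c : V → Fin k}
    (h : G.RainbowVertexConnected c) : G.RVCWith k :=
  ⟨Fin.val ∘ c, fun u v huv =>
    let ⟨p, hp⟩ := h u v huv
    ⟨p, hp.comp Fin.val_injective, fun w _ => (c w).isLt⟩⟩

theorem RainbowVertexConnected.rvc_le_s6 {k : ℕ} {c : V → Fin k}
    (h : G.RainbowVertexConnected c) : G.rvc ≤ k :=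
  Nat.sInf_le h.rvcWith

theorem RainbowVertexConnected.exists_and_rvc_le {k : ℕ} {c : V → Fin k}
    (h : G.RainbowVertexConnected c) :
    (∃ c : V → Fin k, G.RainbowVertexConnected c) ∧ G.rvc ≤ k :=
  ⟨⟨c, h⟩, h.rvc_le_s6⟩

namespace cycleGraph

variable {n : ℕ}

def forwardWalk : (k : ℕ) → (u : Fin (n + 2)) → (cycleGraph (n + 2)).Walk u (u + k)
  | 0, u => Walk.nil.copy rfl (by simp)
  | k + 1, u =>
    (Walk.cons (cycleGraph_adj.mpr (Or.inr (by ring))) (forwardWalk k (u + 1))).copy rfl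
      (by push_cast; ring)

def forwardArc (u v : Fin (n + 2)) : (cycleGraph (n + 2)).Walk u v :=
  (forwardWalk (v - u).val u).copy rfl (by rw [Fin.cast_val_eq_self]; ring)

def backwardArc (u v : Fin (n + 2)) : (cycleGraph (n + 2)).Walk u v :=
  (forwardArc v u).reverse

theorem rainbowVertexConnected_of_arcs {c : Fin (n + 2) → α}
    (h : ∀ u v, u ≠ v → (forwardArc u v).IsRainbowPath c ∨ (backwardArc u v).IsRainbowPath c) :
    (cycleGraph (n + 2)).RainbowVertexConnected c := fun u v huv =>
  (h u v huv).elim (fun h => ⟨_, h⟩) (fun h => ⟨_, h⟩)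

end cycleGraph

end SimpleGraph

open SimpleGraph SimpleGraph.cycleGraph

/-- for `n ∈ {6, 7, 8, 10, 11, 12, 13, 15}` there is a vertex coloring of
`Cₙ` with at most `⌈n/2⌉ - 1` colors making it rainbow vertex-connected; hence
`rvc (Cₙ) ≤ ⌈n/2⌉ - 1`.  (Here `⌈n/2⌉ = (n + 1) / 2` with natural division.) -/
theorem rvc_cycleGraph_le_ceil_half_sub_one (n : ℕ)
    (hn : n ∈ ({6, 7, 8, 10, 11, 12, 13, 15} : Set ℕ)) :
    (∃ c : Fin n → Fin ((n + 1) / 2 - 1),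
      (SimpleGraph.cycleGraph n).RainbowVertexConnected c) ∧
    (SimpleGraph.cycleGraph n).rvc ≤ (n + 1) / 2 - 1 := by
  simp only [Set.mem_insert_iff, Set.mem_singleton_iff] at hn
  rcases hn with rfl | rfl | rfl | rfl | rfl | rfl | rfl | rfl
  · exact (rainbowVertexConnected_of_arcs
      (c := (![0, 1, 0, 0, 0, 1] : _ → Fin 2))
      (by decide +kernel)).exists_and_rvc_le
  · exact (rainbowVertexConnected_of_arcs
      (c := (![0, 2, 2, 0, 2, 0, 1] : _ → Fin 3))
      (by decide +kernel)).exists_and_rvc_le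
  · exact (rainbowVertexConnected_of_arcs
      (c := (![0, 2, 1, 2, 1, 0, 2, 1] : _ → Fin 3))
      (by decide +kernel)).exists_and_rvc_le
  · exact (rainbowVertexConnected_of_arcs
      (c := (![0, 3, 1, 0, 3, 2, 1, 0, 3, 2] : _ → Fin 4))
      (by decide +kernel)).exists_and_rvc_le
  · exact (rainbowVertexConnected_of_arcs
      (c := (![0, 3, 2, 0, 1, 4, 2, 0, 3, 1, 4] : _ → Fin 5))
      (by decide +kernel)).exists_and_rvc_le
  · exact (rainbowVertexConnected_of_arcs
      (c := (![0, 4, 1, 2, 3, 4, 1, 0, 2, 4, 1, 3] : _ → Fin 5))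
      (by decide +kernel)).exists_and_rvc_le
  · exact (rainbowVertexConnected_of_arcs
      (c := (![0, 4, 1, 2, 0, 3, 5, 4, 2, 0, 1, 3, 2] : _ → Fin 6))
      (by decide +kernel)).exists_and_rvc_le
  · exact (rainbowVertexConnected_of_arcs
      (c := (![5, 3, 6, 1, 2, 4, 3, 0, 5, 6, 2, 3, 1, 4, 0] : _ → Fin 7))
      (by decide +kernel)).exists_and_rvc_le
end

section
/- For every even n ≥ 4, the cycle C_n admits a vertex coloring with n/2 colors, in which every color appears exactly twice (namely, coloring C_n = v_1 v_2 ⋯ v_n by giving v_i color i for 1 ≤ i ≤ n/2 and color i − n/2 for n/2 + 1 ≤ i ≤ n), that makes C_n revised rainbow vertex-connected; hence rvc*(C_n) ≤ n/2 for even n. -/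
/-! Colour vertex `i` of `Cₙ`, `n = 2m`, by `i mod m`. Any `m` consecutive vertices then get
distinct colours, so a forward arc `u, u + 1, …, u + d` with `d ≤ m` is a revised rainbow path:
dropping either end vertex leaves at most `m` consecutive vertices. Of the two arcs of the cycle
joining two vertices, one has length at most `m`. -/

open Finset

namespace SimpleGraph

variable {V α β : Type*} {G : SimpleGraph V}

namespace Walk

variable {u v : V} {c : V → α} {p : G.Walk u v}

theorem IsRevisedRainbowPath.reverse (h : p.IsRevisedRainbowPath c) :
    p.reverse.IsRevisedRainbowPath c := by
  obtain ⟨hp, hinit, htail⟩ := h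
  refine ⟨hp.reverse, ?_, ?_⟩ <;> rw [support_reverse]
  · rwa [List.dropLast_reverse, List.map_reverse, List.nodup_reverse]
  · rwa [List.tail_reverse, List.map_reverse, List.nodup_reverse]

theorem IsRevisedRainbowPath.of_comp {g : α → β} (h : p.IsRevisedRainbowPath (g ∘ c)) :
    p.IsRevisedRainbowPath c := by
  obtain ⟨hp, hinit, htail⟩ := h
  rw [← List.map_map] at hinit htail
  exact ⟨hp, hinit.of_map g, htail.of_map g⟩

@[simp]
theorem isRevisedRainbowPath_copy {u' v' : V} (p : G.Walk u v) (hu : u = u') (hv : v = v') :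
    (p.copy hu hv).IsRevisedRainbowPath c ↔ p.IsRevisedRainbowPath c := by
  subst hu hv
  rfl

end Walk

theorem RevisedRainbowVertexConnected.of_comp {c : V → α} {g : α → β}
    (h : G.RevisedRainbowVertexConnected (g ∘ c)) : G.RevisedRainbowVertexConnected c :=
  fun u v huv => (h u v huv).imp fun _ => Walk.IsRevisedRainbowPath.of_comp

theorem rvcStar_le_of_revisedRainbowVertexConnected {k : ℕ} (c : V → Fin k)
    (h : G.RevisedRainbowVertexConnected c) : G.rvcStar ≤ k :=
  Nat.sInf_le ⟨c, h⟩

end SimpleGraph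

theorem List.nodup_map_add_mod_range {m L : ℕ} (a : ℕ) (hL : L ≤ m) :
    ((List.range L).map fun i => (a + i) % m).Nodup := by
  refine List.nodup_range.map_on fun i hi j hj hij => ?_
  rw [List.mem_range] at hi hj
  exact (Nat.ModEq.add_left_cancel' a hij).eq_of_lt_of_lt (by omega) (by omega)

namespace Fin

variable {n m : ℕ}

theorem val_sub_add_val_sub {u v : Fin n} (h : u ≠ v) : (v - u).val + (u - v).val = n := by
  rcases lt_or_gt_of_ne h with h | h
  · rw [Fin.coe_sub_iff_le.2 h.le, Fin.coe_sub_iff_lt.2 h]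
    omega
  · rw [Fin.coe_sub_iff_lt.2 h, Fin.coe_sub_iff_le.2 h.le]
    omega

theorem card_filter_val_mod_eq_of_dvd {x : ℕ} (hmn : m ∣ n) (hx : x < m) :
    #{v : Fin n | v.val % m = x} = n / m := by
  have hcount := Nat.count_modEq_card n (x.zero_le.trans_lt hx) x
  rw [Nat.mod_eq_zero_of_dvd hmn, if_neg (Nat.not_lt_zero _), add_zero] at hcount
  rw [← hcount, Nat.count_eq_card_filter_range, ← Nat.Iio_eq_range, ← Fin.map_valEmbedding_univ,
    filter_map, card_map]
  simp only [Nat.ModEq, Nat.mod_eq_of_lt hx, Function.comp_def, Fin.valEmbedding_apply]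

open scoped Fin.NatCast

theorem val_add_natCast_mod_of_dvd [NeZero n] (hmn : m ∣ n) (u : Fin n) (i : ℕ) :
    (u + (i : Fin n)).val % m = (u.val + i) % m := by
  rw [Fin.val_add, Fin.val_natCast, Nat.mod_mod_of_dvd _ hmn, Nat.add_mod,
    Nat.mod_mod_of_dvd _ hmn, ← Nat.add_mod]

theorem nodup_map_range_val_add_natCast_mod [NeZero n] (hmn : m ∣ n) (u : Fin n) {L : ℕ}
    (hL : L ≤ m) : ((List.range L).map fun i : ℕ => (u + (i : Fin n)).val % m).Nodup := by
  simpa only [val_add_natCast_mod_of_dvd hmn] using List.nodup_map_add_mod_range u.val hL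

end Fin

namespace SimpleGraph

open scoped Fin.NatCast

variable {n : ℕ} [NeZero n]

theorem cycleGraph_adj_add_one (hn : 2 ≤ n) (u : Fin n) : (cycleGraph n).Adj u (u + 1) := by
  rw [cycleGraph_adj']
  right
  simp [Nat.mod_eq_of_lt hn]

namespace cycleGraph

def arc (hn : 2 ≤ n) (u : Fin n) : (d : ℕ) → (cycleGraph n).Walk u (u + d)
  | 0 => Walk.nil.copy rfl (by simp)
  | d + 1 => Walk.cons (cycleGraph_adj_add_one hn u)
      ((arc hn (u + 1) d).copy rfl (by push_cast; abel))

variable {hn : 2 ≤ n}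

theorem support_arc (u : Fin n) (d : ℕ) :
    (arc hn u d).support = (List.range (d + 1)).map fun i : ℕ => u + (i : Fin n) := by
  induction d generalizing u with
  | zero => simp [arc]
  | succ d ih =>
    rw [arc, Walk.support_cons, Walk.support_copy, ih, List.range_succ_eq_map (n := d + 1),
      List.map_cons, List.map_map]
    congr 1
    · simp
    · refine List.map_congr_left fun i _ => ?_
      simp only [Function.comp_apply, Nat.cast_succ]
      abel

theorem isPath_arc (u : Fin n) {d : ℕ} (hd : d < n) : (arc hn u d).IsPath := by
  rw [Walk.isPath_def, support_arc]
  refine List.nodup_range.map_on fun i hi j hj hij => ?_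
  rw [List.mem_range] at hi hj
  simpa [Fin.val_cast_of_lt (hi.trans_le hd), Fin.val_cast_of_lt (hj.trans_le hd)]
    using congrArg Fin.val (add_left_cancel hij)

theorem isRevisedRainbowPath_arc {m : ℕ} (hmn : m ∣ n) (u : Fin n) {d : ℕ} (hdn : d < n)
    (hd : d ≤ m) : (arc hn u d).IsRevisedRainbowPath fun v : Fin n => v.val % m := by
  refine ⟨isPath_arc u hdn, ?_, ?_⟩
  · rw [support_arc, List.range_succ, List.map_append, List.map_singleton, List.dropLast_concat,
      List.map_map]
    exact Fin.nodup_map_range_val_add_natCast_mod hmn u hd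
  · rw [support_arc, List.range_succ_eq_map, List.map_cons, List.tail_cons, List.map_map,
      List.map_map]
    convert Fin.nodup_map_range_val_add_natCast_mod hmn (u + 1) hd using 3
    simp only [Function.comp_apply, Nat.cast_succ]
    abel_nf

theorem exists_isRevisedRainbowPath_of_val_sub_le {m : ℕ} (hmn : n = 2 * m) {u v : Fin n}
    (h : (v - u).val ≤ m) :
    ∃ p : (cycleGraph n).Walk u v, p.IsRevisedRainbowPath fun w : Fin n => w.val % m :=
  have hn : 2 ≤ n := by have := NeZero.ne n; omega
  ⟨(arc hn u (v - u).val).copy rfl (by simp), (Walk.isRevisedRainbowPath_copy _ _ _).2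
    (isRevisedRainbowPath_arc ⟨2, by omega⟩ u (by omega) h)⟩

theorem revisedRainbowVertexConnected_val_mod {m : ℕ} (hmn : n = 2 * m) :
    (cycleGraph n).RevisedRainbowVertexConnected fun v : Fin n => v.val % m := by
  intro u v huv
  rcases le_total (v - u).val m with h | h
  · exact exists_isRevisedRainbowPath_of_val_sub_le hmn h
  · have := Fin.val_sub_add_val_sub huv
    obtain ⟨p, hp⟩ := exists_isRevisedRainbowPath_of_val_sub_le hmn (u := v) (v := u) (by omega)
    exact ⟨p.reverse, hp.reverse⟩

end cycleGraph

end SimpleGraph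

/-- for even `n ≥ 4`, coloring the `i`-th vertex (`0`-indexed) of `Cₙ`
by `i mod (n/2)` uses `n/2` colors, each exactly twice, and makes `Cₙ` revised rainbow
vertex-connected; hence `rvc* (Cₙ) ≤ n/2`. -/
theorem rvcStar_cycleGraph_le_of_even (n : ℕ) (hn : 4 ≤ n) (heven : Even n) :
    (∀ x : Fin (n / 2),
      (Finset.univ.filter (fun v : Fin n =>
        (⟨v.val % (n / 2), Nat.mod_lt _ (by omega)⟩ : Fin (n / 2)) = x)).card = 2) ∧
    (SimpleGraph.cycleGraph n).RevisedRainbowVertexConnected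
      (fun v : Fin n => (⟨v.val % (n / 2), Nat.mod_lt _ (by omega)⟩ : Fin (n / 2))) ∧
    (SimpleGraph.cycleGraph n).rvcStar ≤ n / 2 := by
  have : NeZero n := ⟨by omega⟩
  have hdvd : 2 ∣ n := heven.two_dvd
  have hconn : (SimpleGraph.cycleGraph n).RevisedRainbowVertexConnected
      fun v : Fin n => (⟨v.val % (n / 2), Nat.mod_lt _ (by omega)⟩ : Fin (n / 2)) :=
    .of_comp (g := Fin.val) (SimpleGraph.cycleGraph.revisedRainbowVertexConnected_val_mod
      (Nat.mul_div_cancel' hdvd).symm)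
  refine ⟨fun x => ?_, hconn, SimpleGraph.rvcStar_le_of_revisedRainbowVertexConnected _ hconn⟩
  simp only [Fin.ext_iff]
  rw [Fin.card_filter_val_mod_eq_of_dvd (Nat.div_dvd_of_dvd hdvd) x.isLt,
    Nat.div_div_self hdvd (by omega)]
end
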